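/- arXiv:2309.08748 — 2 statements merged into one kernel-verified Lean document; each statement's English description precedes it below -/
import Mathlib

section
/- Let P be a probability distribution on a finite set of size m with probabilities p(i), and let p̂(i) = (1/n)∑_{j=1}^n 1{s_j = i} be the empirical probabilities from n i.i.d. samples s_1,…,s_n drawn from P. Then E[∑_{i=1}^m |p̂(i) − p(i)|] ≤ √(m/n). -/
/-!
The count of a value `a` among `n` independent samples is a sum of `n` independent Bernoulli(`q`)
indicators, so the empirical frequency `p̂(a)` has mean `q` and variance `q (1 - q) / n ≤ q / n`.
Jensen's inequality `E|X - EX| ≤ √(Var X)` bounds `E|p̂(a) - q|` by `√(q / n)`, and Cauchy–Schwarz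
gives `∑ᵢ √(p(i) / n) ≤ √(m ∑ᵢ p(i) / n) = √(m / n)`.
-/

open MeasureTheory ProbabilityTheory

section

variable {Ω : Type*} [MeasurableSpace Ω] {μ : Measure Ω} [IsProbabilityMeasure μ]

theorem sq_integral_abs_le_integral_sq {f : Ω → ℝ} (hf : MemLp f 2 μ) :
    (∫ ω, |f ω| ∂μ) ^ 2 ≤ ∫ ω, f ω ^ 2 ∂μ := by
  have h := variance_nonneg |f| μ
  rw [variance_eq_sub hf.abs] at h
  simpa [sq_abs] using h

theorem integral_abs_sub_integral_le_sqrt_variance {f : Ω → ℝ} (hf : MemLp f 2 μ) :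
    ∫ ω, |f ω - μ[f]| ∂μ ≤ √(variance f μ) := by
  rw [variance_eq_integral hf.aemeasurable]
  exact Real.le_sqrt_of_sq_le (sq_integral_abs_le_integral_sq (hf.sub (memLp_const _)))

theorem memLp_indicator_one (p : ENNReal) {A : Set Ω} (hA : MeasurableSet A) :
    MemLp (A.indicator (1 : Ω → ℝ)) p μ :=
  memLp_indicator_const p hA 1 (Or.inr (measure_ne_top μ A))

theorem variance_indicator_one {A : Set Ω} (hA : MeasurableSet A) :
    variance (A.indicator 1) μ = μ.real A * (1 - μ.real A) := by
  have hsq : A.indicator (1 : Ω → ℝ) ^ 2 = A.indicator 1 := by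
    ext ω; by_cases h : ω ∈ A <;> simp [h]
  rw [variance_eq_sub (memLp_indicator_one 2 hA), hsq, integral_indicator_one hA]
  ring

theorem variance_sum_indicator_preimage {ι α : Type*} [MeasurableSpace α] {X : ι → Ω → α}
    (hX : ∀ j, Measurable (X j)) (hindep : iIndepFun X μ) {B : Set α} (hB : MeasurableSet B)
    (t : Finset ι) :
    variance (∑ j ∈ t, (X j ⁻¹' B).indicator 1) μ =
      ∑ j ∈ t, μ.real (X j ⁻¹' B) * (1 - μ.real (X j ⁻¹' B)) := by
  have hindep' : iIndepFun (fun j => (X j ⁻¹' B).indicator (1 : Ω → ℝ)) μ :=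
    hindep.comp (fun _ => B.indicator 1) fun _ => measurable_one.indicator hB
  rw [IndepFun.variance_sum (fun j _ => memLp_indicator_one 2 (hX j hB))
    fun j _ k _ hjk => hindep'.indepFun hjk]
  exact Finset.sum_congr rfl fun j _ => variance_indicator_one (hX j hB)

end

theorem Real.sum_sqrt_le_sqrt_card_mul_sum {ι : Type*} (t : Finset ι) {f : ι → ℝ}
    (hf : ∀ i, 0 ≤ f i) : ∑ i ∈ t, √(f i) ≤ √(t.card * ∑ i ∈ t, f i) := by
  have h := Real.sum_sqrt_mul_sqrt_le t hf fun _ => zero_le_one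
  rw [← Real.sqrt_mul (Finset.sum_nonneg fun i _ => hf i), mul_comm] at h
  simpa using h

section

variable {Ω α : Type*} [DecidableEq α] {n : ℕ}

noncomputable def empiricalFreq (s : Fin n → Ω → α) (a : α) (ω : Ω) : ℝ :=
  (n : ℝ)⁻¹ * ∑ j, if s j ω = a then 1 else 0

theorem empiricalFreq_eq_smul_sum_indicator (s : Fin n → Ω → α) (a : α) :
    empiricalFreq s a = (n : ℝ)⁻¹ • ∑ j, (s j ⁻¹' {a}).indicator 1 := by
  ext ω
  simp only [empiricalFreq, Pi.smul_apply, Finset.sum_apply, smul_eq_mul]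
  congr 1
  refine Finset.sum_congr rfl fun j _ => ?_
  by_cases h : s j ω = a <;> simp [h]

variable [MeasurableSpace Ω] [MeasurableSpace α] [MeasurableSingletonClass α]
  {μ : Measure Ω} [IsProbabilityMeasure μ] {s : Fin n → Ω → α} {a : α}

theorem memLp_empiricalFreq (p : ENNReal) (hs : ∀ j, Measurable (s j)) :
    MemLp (empiricalFreq s a) p μ := by
  rw [empiricalFreq_eq_smul_sum_indicator]
  exact (memLp_finsetSum' _ fun j _ => memLp_indicator_one p (hs j (.singleton a))).const_smul _

theorem integral_empiricalFreq (hn : 0 < n) (hs : ∀ j, Measurable (s j)) {q : ℝ}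
    (hq : ∀ j, μ.real (s j ⁻¹' {a}) = q) : μ[empiricalFreq s a] = q := by
  simp only [empiricalFreq_eq_smul_sum_indicator, Pi.smul_apply, Finset.sum_apply]
  rw [integral_smul,
    integral_finsetSum _ fun j _ => (memLp_indicator_one 1 (hs j (.singleton a))).integrable le_rfl]
  simp only [integral_indicator_one (hs _ (.singleton a)), hq, Finset.sum_const, Finset.card_univ,
    Fintype.card_fin, nsmul_eq_mul, smul_eq_mul]
  field_simp

theorem variance_empiricalFreq (hs : ∀ j, Measurable (s j)) (hindep : iIndepFun s μ) {q : ℝ}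
    (hq : ∀ j, μ.real (s j ⁻¹' {a}) = q) : variance (empiricalFreq s a) μ = q * (1 - q) / n := by
  rw [empiricalFreq_eq_smul_sum_indicator, variance_smul,
    variance_sum_indicator_preimage hs hindep (.singleton a)]
  simp only [inv_pow, hq, Finset.sum_const, Finset.card_univ, Fintype.card_fin, nsmul_eq_mul]
  rcases n.eq_zero_or_pos with rfl | hn
  · simp
  · field_simp

theorem integral_abs_empiricalFreq_sub_le (hn : 0 < n) (hs : ∀ j, Measurable (s j))
    (hindep : iIndepFun s μ) {q : ℝ} (hq : ∀ j, μ.real (s j ⁻¹' {a}) = q) :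
    ∫ ω, |empiricalFreq s a ω - q| ∂μ ≤ √(q / n) := by
  calc ∫ ω, |empiricalFreq s a ω - q| ∂μ
      ≤ √(variance (empiricalFreq s a) μ) := by
        simpa only [integral_empiricalFreq hn hs hq] using
          integral_abs_sub_integral_le_sqrt_variance (memLp_empiricalFreq (μ := μ) (a := a) 2 hs)
    _ ≤ √(q / n) := by
        rw [variance_empiricalFreq hs hindep hq]
        gcongr
        nlinarith [sq_nonneg q]

end

theorem empirical_tv_expectation_bound_general
    {Ω : Type*} [MeasurableSpace Ω] (μ : Measure Ω) [IsProbabilityMeasure μ]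
    (m n : ℕ) (hn : 0 < n) (p : Fin m → ℝ)
    (hp : ∀ i, 0 ≤ p i) (hps : ∑ i, p i = 1)
    (s : Fin n → Ω → Fin m) (hmeas : ∀ j, Measurable (s j))
    (hindep : iIndepFun s μ)
    (hdist : ∀ j i, μ {ω | s j ω = i} = ENNReal.ofReal (p i)) :
    ∫ ω, (∑ i, |((n : ℝ)⁻¹ * ∑ j, if s j ω = i then (1 : ℝ) else 0) - p i|) ∂μ ≤
      Real.sqrt ((m : ℝ) / n) := by
  have hq : ∀ i j, μ.real (s j ⁻¹' {i}) = p i := fun i j =>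
    (congrArg ENNReal.toReal (hdist j i)).trans (ENNReal.toReal_ofReal (hp i))
  calc ∫ ω, (∑ i, |empiricalFreq s i ω - p i|) ∂μ
      = ∑ i, ∫ ω, |empiricalFreq s i ω - p i| ∂μ := integral_finsetSum _ fun i _ =>
        (((memLp_empiricalFreq 1 hmeas).integrable le_rfl).sub (integrable_const _)).abs
    _ ≤ ∑ i, √(p i / n) := Finset.sum_le_sum fun i _ =>
        integral_abs_empiricalFreq_sub_le hn hmeas hindep (hq i)
    _ ≤ √(Finset.univ.card * ∑ i, p i / n) :=
        Real.sum_sqrt_le_sqrt_card_mul_sum _ fun i => div_nonneg (hp i) n.cast_nonneg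
    _ = √(m / n) := by rw [← Finset.sum_div, hps, Finset.card_univ, Fintype.card_fin, mul_one_div]

theorem empirical_tv_expectation_bound
    {Ω : Type*} [MeasurableSpace Ω] (μ : Measure Ω) [IsProbabilityMeasure μ]
    (m n : ℕ) (hm : 0 < m) (hn : 0 < n) (p : Fin m → ℝ)
    (hp : ∀ i, 0 ≤ p i) (hps : ∑ i, p i = 1)
    (s : Fin n → Ω → Fin m) (hmeas : ∀ j, Measurable (s j))
    (hindep : iIndepFun s μ)
    (hdist : ∀ j i, μ {ω | s j ω = i} = ENNReal.ofReal (p i)) :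
    ∫ ω, (∑ i, |((n : ℝ)⁻¹ * ∑ j, if s j ω = i then (1 : ℝ) else 0) - p i|) ∂μ ≤
      Real.sqrt ((m : ℝ) / n) :=
  empirical_tv_expectation_bound_general μ m n hn p hp hps s hmeas hindep hdist
end

section
/- Let X be a finite set of reals, and let p, p̂ be two probability mass functions on X. For any given policy data, let l, l̂ : X → ℝ satisfy 0 ≤ l(ζ) ≤ Y_max and 0 ≤ l̂(ζ) ≤ Y_max for all ζ. Define V = inf_{λ≥0}{ελ + ∑_i p(x_i) sup_{ζ∈X}(l(ζ) − λ(x_i−ζ)²)} and V̂ = inf_{λ≥0}{ελ + ∑_i p̂(x_i) sup_{ζ∈X}(l̂(ζ) − λ(x_i−ζ)²)}, with ε > 0. Then |V̂ − V| ≤ Y_max ∑_i |p̂(x_i) − p(x_i)| + sup_{ζ∈X} |l̂(ζ) − l(ζ)|. -/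
open Finset

lemma sup_bounds (X : Finset ℝ) (hX : X.Nonempty) (Ymax : ℝ) (l : ℝ → ℝ)
    (hl : ∀ ζ ∈ X, 0 ≤ l ζ ∧ l ζ ≤ Ymax) (lam x : ℝ) (hlam : 0 ≤ lam) (hx : x ∈ X) :
    0 ≤ X.sup' hX (fun ζ => l ζ - lam * (x - ζ) ^ 2) ∧
      X.sup' hX (fun ζ => l ζ - lam * (x - ζ) ^ 2) ≤ Ymax := by
  constructor
  · have h := Finset.le_sup' (fun ζ => l ζ - lam * (x - ζ) ^ 2) hx
    have h0 : l x - lam * (x - x) ^ 2 = l x := by ring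
    rw [h0] at h
    linarith [(hl x hx).1]
  · apply Finset.sup'_le
    intro ζ hζ
    have := (hl ζ hζ).2
    nlinarith [mul_nonneg hlam (sq_nonneg (x - ζ))]

lemma sup_close (X : Finset ℝ) (hX : X.Nonempty) (l lhat : ℝ → ℝ) (lam x : ℝ)
    (hd : ∀ ζ ∈ X, lhat ζ - l ζ ≤ X.sup' hX (fun ζ => |lhat ζ - l ζ|)) :
    X.sup' hX (fun ζ => lhat ζ - lam * (x - ζ) ^ 2) ≤
      X.sup' hX (fun ζ => l ζ - lam * (x - ζ) ^ 2) + X.sup' hX (fun ζ => |lhat ζ - l ζ|) := by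
  apply Finset.sup'_le
  intro ζ hζ
  have h1 := Finset.le_sup' (fun ζ => l ζ - lam * (x - ζ) ^ 2) hζ
  have h2 := hd ζ hζ
  linarith

lemma sum_close (X : Finset ℝ) (hX : X.Nonempty) (p phat : ℝ → ℝ)
    (hp : ∀ x ∈ X, 0 ≤ p x) (hps : ∑ x ∈ X, p x = 1)
    (Ymax : ℝ) (l lhat : ℝ → ℝ)
    (hl : ∀ ζ ∈ X, 0 ≤ l ζ ∧ l ζ ≤ Ymax)
    (hlhat : ∀ ζ ∈ X, 0 ≤ lhat ζ ∧ lhat ζ ≤ Ymax)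
    (lam : ℝ) (hlam : 0 ≤ lam) (D : ℝ)
    (hd : ∀ ζ ∈ X, lhat ζ - l ζ ≤ D)
    (hDsup : D = X.sup' hX (fun ζ => |lhat ζ - l ζ|)) :
    ∑ x ∈ X, phat x * X.sup' hX (fun ζ => lhat ζ - lam * (x - ζ) ^ 2) ≤
      ∑ x ∈ X, p x * X.sup' hX (fun ζ => l ζ - lam * (x - ζ) ^ 2) +
        (Ymax * ∑ x ∈ X, |phat x - p x| + D) := by
  have key : ∀ x ∈ X,
      phat x * X.sup' hX (fun ζ => lhat ζ - lam * (x - ζ) ^ 2) ≤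
      p x * X.sup' hX (fun ζ => l ζ - lam * (x - ζ) ^ 2) + (|phat x - p x| * Ymax + p x * D) := by
    intro x hx
    set Sh := X.sup' hX (fun ζ => lhat ζ - lam * (x - ζ) ^ 2) with hSh
    set S := X.sup' hX (fun ζ => l ζ - lam * (x - ζ) ^ 2) with hS
    obtain ⟨hSh0, hShY⟩ := sup_bounds X hX Ymax lhat hlhat lam x hlam hx
    have hclose : Sh ≤ S + D := by
      rw [hSh, hS, hDsup]
      exact sup_close X hX l lhat lam x (fun ζ hζ => hDsup ▸ hd ζ hζ)
    have h1 : (phat x - p x) * Sh ≤ |phat x - p x| * Sh :=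
      mul_le_mul_of_nonneg_right (le_abs_self _) hSh0
    have h2 : |phat x - p x| * Sh ≤ |phat x - p x| * Ymax :=
      mul_le_mul_of_nonneg_left hShY (abs_nonneg _)
    have h3 : p x * (Sh - S) ≤ p x * D :=
      mul_le_mul_of_nonneg_left (by linarith) (hp x hx)
    nlinarith
  calc ∑ x ∈ X, phat x * X.sup' hX (fun ζ => lhat ζ - lam * (x - ζ) ^ 2)
      ≤ ∑ x ∈ X, (p x * X.sup' hX (fun ζ => l ζ - lam * (x - ζ) ^ 2) +
          (|phat x - p x| * Ymax + p x * D)) := Finset.sum_le_sum key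
    _ = ∑ x ∈ X, p x * X.sup' hX (fun ζ => l ζ - lam * (x - ζ) ^ 2) +
          (Ymax * ∑ x ∈ X, |phat x - p x| + D) := by
        rw [Finset.sum_add_distrib, Finset.sum_add_distrib, ← Finset.sum_mul,
          ← Finset.sum_mul, hps]
        ring

theorem error_decomposition
    (X : Finset ℝ) (hX : X.Nonempty) (p phat : ℝ → ℝ)
    (hp : ∀ x ∈ X, 0 ≤ p x) (hps : ∑ x ∈ X, p x = 1)
    (hphat : ∀ x ∈ X, 0 ≤ phat x) (hphats : ∑ x ∈ X, phat x = 1)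
    (Ymax : ℝ) (l lhat : ℝ → ℝ)
    (hl : ∀ ζ ∈ X, 0 ≤ l ζ ∧ l ζ ≤ Ymax)
    (hlhat : ∀ ζ ∈ X, 0 ≤ lhat ζ ∧ lhat ζ ≤ Ymax)
    (ε : ℝ) (hε : 0 < ε) :
    |(⨅ lam : Set.Ici (0 : ℝ),
        (ε * (lam : ℝ) +
          ∑ x ∈ X, phat x * X.sup' hX (fun ζ => lhat ζ - (lam : ℝ) * (x - ζ) ^ 2))) -
     (⨅ lam : Set.Ici (0 : ℝ),
        (ε * (lam : ℝ) +
          ∑ x ∈ X, p x * X.sup' hX (fun ζ => l ζ - (lam : ℝ) * (x - ζ) ^ 2)))| ≤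
      Ymax * ∑ x ∈ X, |phat x - p x| + X.sup' hX (fun ζ => |lhat ζ - l ζ|) := by
  set D := X.sup' hX (fun ζ => |lhat ζ - l ζ|) with hDdef
  set C := Ymax * ∑ x ∈ X, |phat x - p x| + D with hCdef
  have hd1 : ∀ ζ ∈ X, lhat ζ - l ζ ≤ D := fun ζ hζ =>
    le_trans (le_abs_self _) (Finset.le_sup' (fun ζ => |lhat ζ - l ζ|) hζ)
  have hd2 : ∀ ζ ∈ X, l ζ - lhat ζ ≤ D := fun ζ hζ => by
    calc l ζ - lhat ζ ≤ |lhat ζ - l ζ| := by rw [abs_sub_comm]; exact le_abs_self _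
      _ ≤ D := Finset.le_sup' (fun ζ => |lhat ζ - l ζ|) hζ
  have hDsym : D = X.sup' hX (fun ζ => |l ζ - lhat ζ|) := by
    rw [hDdef]; congr 1; funext ζ; exact abs_sub_comm _ _
  have hsumsym : ∑ x ∈ X, |phat x - p x| = ∑ x ∈ X, |p x - phat x| :=
    Finset.sum_congr rfl (fun x _ => abs_sub_comm _ _)
  set Fh : Set.Ici (0 : ℝ) → ℝ := fun lam =>
    ε * (lam : ℝ) + ∑ x ∈ X, phat x * X.sup' hX (fun ζ => lhat ζ - (lam : ℝ) * (x - ζ) ^ 2)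
    with hFh
  set F : Set.Ici (0 : ℝ) → ℝ := fun lam =>
    ε * (lam : ℝ) + ∑ x ∈ X, p x * X.sup' hX (fun ζ => l ζ - (lam : ℝ) * (x - ζ) ^ 2)
    with hF
  have hpt1 : ∀ lam : Set.Ici (0 : ℝ), Fh lam ≤ F lam + C := by
    intro lam
    have := sum_close X hX p phat hp hps Ymax l lhat hl hlhat lam lam.2 D hd1 hDdef
    simp only [hFh, hF, hCdef]
    linarith
  have hpt2 : ∀ lam : Set.Ici (0 : ℝ), F lam ≤ Fh lam + C := by
    intro lam
    have := sum_close X hX phat p hphat hphats Ymax lhat l hlhat hl lam lam.2 D hd2 hDsym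
    simp only [hFh, hF, hCdef]
    rw [hsumsym]
    linarith
  have hF0 : ∀ lam : Set.Ici (0 : ℝ), 0 ≤ F lam := by
    intro lam
    have hs : 0 ≤ ∑ x ∈ X, p x * X.sup' hX (fun ζ => l ζ - (lam : ℝ) * (x - ζ) ^ 2) :=
      Finset.sum_nonneg fun x hx =>
        mul_nonneg (hp x hx) (sup_bounds X hX Ymax l hl lam x lam.2 hx).1
    have : 0 ≤ ε * (lam : ℝ) := mul_nonneg hε.le lam.2
    simp only [hF]; linarith
  have hFh0 : ∀ lam : Set.Ici (0 : ℝ), 0 ≤ Fh lam := by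
    intro lam
    have hs : 0 ≤ ∑ x ∈ X, phat x * X.sup' hX (fun ζ => lhat ζ - (lam : ℝ) * (x - ζ) ^ 2) :=
      Finset.sum_nonneg fun x hx =>
        mul_nonneg (hphat x hx) (sup_bounds X hX Ymax lhat hlhat lam x lam.2 hx).1
    have : 0 ≤ ε * (lam : ℝ) := mul_nonneg hε.le lam.2
    simp only [hFh]; linarith
  have hbF : BddBelow (Set.range F) := ⟨0, by rintro _ ⟨lam, rfl⟩; exact hF0 lam⟩
  have hbFh : BddBelow (Set.range Fh) := ⟨0, by rintro _ ⟨lam, rfl⟩; exact hFh0 lam⟩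
  have hne : Nonempty (Set.Ici (0 : ℝ)) := ⟨⟨0, Set.self_mem_Ici⟩⟩
  rw [abs_sub_le_iff]
  constructor
  · have h1 : (⨅ lam, Fh lam) - C ≤ ⨅ lam, F lam := by
      apply le_ciInf
      intro lam
      have := ciInf_le hbFh lam
      linarith [hpt1 lam]
    linarith
  · have h2 : (⨅ lam, F lam) - C ≤ ⨅ lam, Fh lam := by
      apply le_ciInf
      intro lam
      have := ciInf_le hbF lam
      linarith [hpt2 lam]
    linarith
end
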